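/- For the cut function C built from the mutual-information capacities ρ_l(U,W) = I(X_U; Ŷ_W | X_{O_l\U}) on a layered network, and any Ω ⊆ V, C(Ω) = Σ_{l=1}^{L−1} I(X_{Ω∩O_l}; Ŷ_{O_{l+1}\Ω} | X_{O_l\Ω}) = I(Ŷ_{Ω^c}; X_Ω | X_{Ω^c}), where Ŷ_{Ω^c} = (Ŷ_v)_{v∈Ω^c} and X_Ω = (X_v)_{v∈Ω}. -/

import Mathlib

open Finset

noncomputable section

/-- Probability that the discrete random variable `Z` takes the value `b`,
under the weight function `p` on the finite sample space `Ω`. -/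
def prOf {Ω : Type} [Fintype Ω] (p : Ω → ℝ) {β : Type} [DecidableEq β]
    (Z : Ω → β) (b : β) : ℝ :=
  ∑ ω, if Z ω = b then p ω else 0

/-- Shannon entropy (base 2) of a discrete random variable. -/
def ent {Ω : Type} [Fintype Ω] (p : Ω → ℝ) {β : Type} [Fintype β] [DecidableEq β]
    (Z : Ω → β) : ℝ :=
  -∑ b, prOf p Z b * Real.logb 2 (prOf p Z b)

/-- Conditional entropy `H(Z | W)`. -/
def condEnt {Ω : Type} [Fintype Ω] (p : Ω → ℝ) {β γ : Type} [Fintype β] [DecidableEq β]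
    [Fintype γ] [DecidableEq γ] (Z : Ω → β) (W : Ω → γ) : ℝ :=
  ent p (fun ω => (Z ω, W ω)) - ent p W

/-- Mutual information `I(Z₁; Z₂)`. -/
def mi {Ω : Type} [Fintype Ω] (p : Ω → ℝ) {β₁ β₂ : Type} [Fintype β₁] [DecidableEq β₁]
    [Fintype β₂] [DecidableEq β₂] (Z₁ : Ω → β₁) (Z₂ : Ω → β₂) : ℝ :=
  ent p Z₁ + ent p Z₂ - ent p (fun ω => (Z₁ ω, Z₂ ω))

/-- Conditional mutual information `I(Z₁; Z₂ | W)`. -/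
def condMI {Ω : Type} [Fintype Ω] (p : Ω → ℝ) {β₁ β₂ γ : Type} [Fintype β₁] [DecidableEq β₁]
    [Fintype β₂] [DecidableEq β₂] [Fintype γ] [DecidableEq γ]
    (Z₁ : Ω → β₁) (Z₂ : Ω → β₂) (W : Ω → γ) : ℝ :=
  condEnt p Z₁ W + condEnt p Z₂ W - condEnt p (fun ω => (Z₁ ω, Z₂ ω)) W

/-- The joint random variable `(X_a)_{a ∈ A}` over a finite index set `A`. -/
def joint {Ω ι β : Type} (X : ι → Ω → β) (A : Finset ι) : Ω → (A → β) :=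
  fun ω a => X a.1 ω

/-! Summing out the relay outputs `Y`, the law of `(X, Ŷ)` is `∏ᵥ P(X_v = x_v) · ∏ᵥ K_v(x, ŷ_v)`,
where `K_v` only reads the inputs of the layer before `v`. So for every `m` the block
`(X_{O_m}, Ŷ_{O_{m+1}})` is independent of all remaining inputs and outputs, and conditioning
`Ŷ_{O_{m+1}}` on anything outside the block adds nothing to conditioning on `X_{O_m}`. With the
chain rule this gives `H(Ŷ_{Ωᶜ} | X_C) = Σ_l H(Ŷ_{O_{l+1} \ Ω} | X_{O_l ∩ C})` for every `C`.
Both sides of the theorem are differences of two such conditional entropies, for `C = Ωᶜ` and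
`C = V`, so they agree term by term. -/

open Function

section Entropy

variable {Ω : Type} [Fintype Ω] (p : Ω → ℝ)

theorem prOf_nonneg (hp : ∀ ω, 0 ≤ p ω) {β : Type} [DecidableEq β] (Z : Ω → β) (b : β) :
    0 ≤ prOf p Z b :=
  sum_nonneg fun ω _ => by split_ifs <;> simp [hp ω]

theorem sum_prOf_mul {β : Type} [Fintype β] [DecidableEq β] (Z : Ω → β) (h : β → ℝ) :
    ∑ b, prOf p Z b * h b = ∑ ω, p ω * h (Z ω) := by
  simp only [prOf, sum_mul, ite_mul, zero_mul]
  rw [sum_comm]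
  simp

theorem prOf_comp {β β' : Type} [Fintype β] [DecidableEq β] [DecidableEq β']
    (Z : Ω → β) (g : β → β') (b : β') :
    prOf p (fun ω => g (Z ω)) b = ∑ s, if g s = b then prOf p Z s else 0 := by
  have h := sum_prOf_mul p Z fun s => if g s = b then 1 else 0
  simp only [mul_ite, mul_one, mul_zero] at h
  rw [h]
  rfl

theorem prOf_comp_of_injective {β β' : Type} [DecidableEq β] [DecidableEq β']
    (Z : Ω → β) {g : β → β'} (hg : Injective g) (b : β) :
    prOf p (fun ω => g (Z ω)) (g b) = prOf p Z b := by
  simp only [prOf, hg.eq_iff]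

theorem prOf_comp_equiv {β β' : Type} [DecidableEq β] [DecidableEq β']
    (Z : Ω → β) (e : β ≃ β') (b : β') :
    prOf p (fun ω => e (Z ω)) b = prOf p Z (e.symm b) := by
  rw [← prOf_comp_of_injective p Z e.injective, e.apply_symm_apply]

theorem prOf_le_prOf_comp (hp : ∀ ω, 0 ≤ p ω) {β β' : Type} [DecidableEq β] [DecidableEq β']
    (Z : Ω → β) (g : β → β') (s : β) :
    prOf p Z s ≤ prOf p (fun ω => g (Z ω)) (g s) :=
  sum_le_sum fun ω _ => by
    by_cases h : Z ω = s
    · simp [h]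
    · split_ifs <;> simp [hp ω]

theorem ent_comp_eq {β β' : Type} [Fintype β] [DecidableEq β] [Fintype β'] [DecidableEq β']
    (Z : Ω → β) (g : β → β') :
    ent p (fun ω => g (Z ω)) =
      -∑ s, prOf p Z s * Real.logb 2 (prOf p (fun ω => g (Z ω)) (g s)) := by
  rw [ent, sum_prOf_mul, sum_prOf_mul]

theorem ent_comp_of_injective {β β' : Type} [Fintype β] [DecidableEq β] [Fintype β']
    [DecidableEq β'] (Z : Ω → β) {g : β → β'} (hg : Injective g) :
    ent p (fun ω => g (Z ω)) = ent p Z := by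
  rw [ent_comp_eq, ent]
  simp only [prOf_comp_of_injective p Z hg]

variable {β β' δ δ' : Type} [Fintype β] [DecidableEq β] [Fintype β'] [DecidableEq β']
  [Fintype δ] [DecidableEq δ] [Fintype δ'] [DecidableEq δ']

theorem condEnt_comp_left_of_injective (Z : Ω → β) (W : Ω → δ) {g : β → β'}
    (hg : Injective g) : condEnt p (fun ω => g (Z ω)) W = condEnt p Z W := by
  rw [condEnt, condEnt]
  congr 1
  exact ent_comp_of_injective p (fun ω => (Z ω, W ω)) (hg.prodMap injective_id)

theorem condEnt_comp_right_of_injective (Z : Ω → β) (W : Ω → δ) {g : δ → δ'}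
    (hg : Injective g) : condEnt p Z (fun ω => g (W ω)) = condEnt p Z W := by
  rw [condEnt, condEnt, ent_comp_of_injective p W hg]
  congr 1
  exact ent_comp_of_injective p (fun ω => (Z ω, W ω)) (injective_id.prodMap hg)

theorem condEnt_eq_zero_of_subsingleton [Subsingleton β] (Z : Ω → β) (W : Ω → δ) :
    condEnt p Z W = 0 := by
  have hsnd : Injective (Prod.snd : β × δ → δ) := fun a b h => Prod.ext (Subsingleton.elim _ _) h
  rw [condEnt, ← ent_comp_of_injective p (fun ω => (Z ω, W ω)) hsnd]
  exact sub_self _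

theorem condEnt_pair_eq_add (Z₁ : Ω → β) (Z₂ : Ω → β') (W : Ω → δ) :
    condEnt p (fun ω => (Z₁ ω, Z₂ ω)) W =
      condEnt p Z₁ W + condEnt p Z₂ (fun ω => (Z₁ ω, W ω)) := by
  have hassoc : ent p (fun ω => (Z₂ ω, Z₁ ω, W ω)) = ent p (fun ω => ((Z₁ ω, Z₂ ω), W ω)) :=
    ent_comp_of_injective p (fun ω => ((Z₁ ω, Z₂ ω), W ω)) (g := fun s => (s.1.2, s.1.1, s.2))
      fun a b h => by
        simp only [Prod.mk.injEq] at h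
        exact Prod.ext (Prod.ext h.2.1 h.1) h.2.2
  simp only [condEnt, hassoc]
  ring

theorem condMI_eq_condEnt_sub (Z₁ : Ω → β) (Z₂ : Ω → β') (W : Ω → δ) :
    condMI p Z₁ Z₂ W = condEnt p Z₂ W - condEnt p Z₂ (fun ω => (Z₁ ω, W ω)) := by
  rw [condMI, condEnt_pair_eq_add]
  ring

theorem condMI_comm (Z₁ : Ω → β) (Z₂ : Ω → β') (W : Ω → δ) :
    condMI p Z₁ Z₂ W = condMI p Z₂ Z₁ W := by
  have hswap : condEnt p (fun ω => (Z₂ ω, Z₁ ω)) W = condEnt p (fun ω => (Z₁ ω, Z₂ ω)) W :=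
    condEnt_comp_left_of_injective p (fun ω => (Z₁ ω, Z₂ ω)) W (g := Prod.swap)
      Prod.swap_injective
  rw [condMI, condMI, hswap]
  ring

theorem mul_logb_cross_eq {a b F G : ℝ} (h : a * b ≠ 0 → F * G ≠ 0) :
    a * b * Real.logb 2 (a * G) + a * b * Real.logb 2 (F * b) =
      a * b * Real.logb 2 (a * b) + a * b * Real.logb 2 (F * G) := by
  by_cases hab : a * b = 0
  · simp [hab]
  obtain ⟨ha, hb⟩ := mul_ne_zero_iff.1 hab
  obtain ⟨hF, hG⟩ := mul_ne_zero_iff.1 (h hab)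
  rw [Real.logb_mul ha hG, Real.logb_mul hF hb, Real.logb_mul ha hb, Real.logb_mul hF hG]
  ring

theorem condMI_eq_zero_of_prOf_eq_mul (hp : ∀ ω, 0 ≤ p ω) (Z₁ : Ω → β) (Z₂ : Ω → β')
    (W : Ω → δ) (f : β → δ → ℝ) (g : β' → δ → ℝ)
    (hfg : ∀ b₁ b₂ c, prOf p (fun ω => (Z₁ ω, Z₂ ω, W ω)) (b₁, b₂, c) = f b₁ c * g b₂ c) :
    condMI p Z₁ Z₂ W = 0 := by
  set T := fun ω => (Z₁ ω, Z₂ ω, W ω)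
  set F := fun c => ∑ b₁, f b₁ c
  set G := fun c => ∑ b₂, g b₂ c
  have h₁₃ : ∀ b₁ c, prOf p (fun ω => (Z₁ ω, W ω)) (b₁, c) = f b₁ c * G c := by
    intro b₁ c
    refine (prOf_comp p T (fun s => (s.1, s.2.2)) (b₁, c)).trans ?_
    simp [Fintype.sum_prod_type, hfg, ite_and, G, mul_sum]
  have h₂₃ : ∀ b₂ c, prOf p (fun ω => (Z₂ ω, W ω)) (b₂, c) = F c * g b₂ c := by
    intro b₂ c
    refine (prOf_comp p T (fun s => (s.2.1, s.2.2)) (b₂, c)).trans ?_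
    simp [Fintype.sum_prod_type, hfg, F, sum_mul]
  have h₃ : ∀ c, prOf p W c = F c * G c := by
    intro c
    refine (prOf_comp p T (fun s => s.2.2) c).trans ?_
    simp [Fintype.sum_prod_type, hfg, F, G, sum_mul_sum]
  have e₁₃ : ent p (fun ω => (Z₁ ω, W ω)) =
      -∑ s, prOf p T s * Real.logb 2 (prOf p (fun ω => (Z₁ ω, W ω)) (s.1, s.2.2)) :=
    ent_comp_eq p T (fun s => (s.1, s.2.2))
  have e₂₃ : ent p (fun ω => (Z₂ ω, W ω)) =
      -∑ s, prOf p T s * Real.logb 2 (prOf p (fun ω => (Z₂ ω, W ω)) (s.2.1, s.2.2)) :=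
    ent_comp_eq p T (fun s => (s.2.1, s.2.2))
  have e₃ : ent p W = -∑ s, prOf p T s * Real.logb 2 (prOf p W s.2.2) :=
    ent_comp_eq p T (fun s => s.2.2)
  have e₁₂₃ : ent p (fun ω => ((Z₁ ω, Z₂ ω), W ω)) = ent p T :=
    ent_comp_of_injective p T (g := fun s => ((s.1, s.2.1), s.2.2)) fun a b h => by
      simp only [Prod.mk.injEq] at h
      exact Prod.ext h.1.1 (Prod.ext h.1.2 h.2)
  -- Each entropy is an expectation under the law of `T`, and the logarithms cancel pointwise.
  have key : ∑ s, (prOf p T s * Real.logb 2 (prOf p (fun ω => (Z₁ ω, W ω)) (s.1, s.2.2)) +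
        prOf p T s * Real.logb 2 (prOf p (fun ω => (Z₂ ω, W ω)) (s.2.1, s.2.2))) =
      ∑ s, (prOf p T s * Real.logb 2 (prOf p T s) +
        prOf p T s * Real.logb 2 (prOf p W s.2.2)) := by
    refine sum_congr rfl fun ⟨b₁, b₂, c⟩ _ => ?_
    have hle : prOf p T (b₁, b₂, c) ≤ prOf p W c := prOf_le_prOf_comp p hp T (fun s => s.2.2) _
    have h0 := prOf_nonneg p hp T (b₁, b₂, c)
    rw [hfg, h₃] at hle
    rw [hfg] at h0
    dsimp only
    rw [hfg, h₁₃, h₂₃, h₃]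
    exact mul_logb_cross_eq fun h => (lt_of_lt_of_le (lt_of_le_of_ne h0 (Ne.symm h)) hle).ne'
  rw [sum_add_distrib, sum_add_distrib] at key
  rw [condMI, condEnt, condEnt, condEnt, e₁₃, e₂₃, e₃, e₁₂₃, ent]
  linarith

def IndepLaw {α₁ α₂ : Type} [DecidableEq α₁] [DecidableEq α₂] (Z₁ : Ω → α₁) (Z₂ : Ω → α₂) :
    Prop :=
  ∃ (f : α₁ → ℝ) (g : α₂ → ℝ), ∀ a₁ a₂, prOf p (fun ω => (Z₁ ω, Z₂ ω)) (a₁, a₂) = f a₁ * g a₂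

theorem IndepLaw.condMI_comp_eq_zero (hp : ∀ ω, 0 ≤ p ω) {α₁ α₂ : Type} [Fintype α₁]
    [DecidableEq α₁] [Fintype α₂] [DecidableEq α₂] {Z₁ : Ω → α₁} {Z₂ : Ω → α₂}
    (h : IndepLaw p Z₁ Z₂) (φ : α₂ → β) (ψ : α₁ → β') (χ : α₁ → δ) :
    condMI p (fun ω => φ (Z₂ ω)) (fun ω => ψ (Z₁ ω)) (fun ω => χ (Z₁ ω)) = 0 := by
  obtain ⟨f, g, hfg⟩ := h
  refine condMI_eq_zero_of_prOf_eq_mul p hp _ _ _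
    (fun b _ => ∑ a₂, if φ a₂ = b then g a₂ else 0)
    (fun b' d => ∑ a₁, if ψ a₁ = b' ∧ χ a₁ = d then f a₁ else 0) fun b b' d => ?_
  refine (prOf_comp p (fun ω => (Z₁ ω, Z₂ ω)) (fun a => (φ a.2, ψ a.1, χ a.1)) (b, b', d)).trans ?_
  simp only [Fintype.sum_prod_type, hfg, sum_mul_sum, Prod.mk.injEq]
  rw [sum_comm]
  refine sum_congr rfl fun _ _ => sum_congr rfl fun _ _ => ?_
  split_ifs <;> first | ring1 | (exfalso; tauto)

end Entropy

section Joint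

variable {V : Type} [DecidableEq V]

theorem restrict₂_pair_injective {β : Type} {A B C : Finset V} (hA : A ⊆ C) (hB : B ⊆ C)
    (hC : C ⊆ A ∪ B) :
    Injective fun x : (C → β) =>
      (restrict₂ (π := fun _ => β) hA x, restrict₂ (π := fun _ => β) hB x) := by
  intro x y h
  funext v
  rcases mem_union.1 (hC v.2) with hv | hv
  · exact congrFun (Prod.ext_iff.1 h).1 ⟨v, hv⟩
  · exact congrFun (Prod.ext_iff.1 h).2 ⟨v, hv⟩

variable {Ω β δ : Type} [Fintype Ω] (p : Ω → ℝ) [Fintype β] [DecidableEq β] [Fintype δ]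
  [DecidableEq δ]

theorem condEnt_joint_union_left (X : V → Ω → β) (Z : Ω → δ) (A B : Finset V) :
    condEnt p (fun ω => (joint X A ω, joint X B ω)) Z = condEnt p (joint X (A ∪ B)) Z :=
  condEnt_comp_left_of_injective p (joint X (A ∪ B)) Z
    (g := fun x => (restrict₂ (π := fun _ => β) subset_union_left x,
      restrict₂ (π := fun _ => β) subset_union_right x))
    (restrict₂_pair_injective subset_union_left subset_union_right subset_rfl)

theorem condEnt_joint_union_right (X : V → Ω → β) (Z : Ω → δ) (A B : Finset V) :
    condEnt p Z (fun ω => (joint X A ω, joint X B ω)) = condEnt p Z (joint X (A ∪ B)) :=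
  condEnt_comp_right_of_injective p Z (joint X (A ∪ B))
    (g := fun x => (restrict₂ (π := fun _ => β) subset_union_left x,
      restrict₂ (π := fun _ => β) subset_union_right x))
    (restrict₂_pair_injective subset_union_left subset_union_right subset_rfl)

theorem condMI_joint_eq (X : V → Ω → β) (Z : Ω → δ) (A B : Finset V) :
    condMI p (joint X A) Z (joint X B) =
      condEnt p Z (joint X B) - condEnt p Z (joint X (A ∪ B)) := by
  rw [condMI_eq_condEnt_sub, condEnt_joint_union_right]

theorem condMI_joint_inter_sdiff (X : V → Ω → β) (Z : Ω → δ) (S A : Finset V) :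
    condMI p (joint X (S ∩ A)) Z (joint X (A \ S)) =
      condEnt p Z (joint X (A \ S)) - condEnt p Z (joint X A) := by
  rw [condMI_joint_eq, union_comm, inter_comm, sdiff_union_inter]

end Joint

section Layers

variable {Ω V β γ : Type} [Fintype Ω] (p : Ω → ℝ) [Fintype V] [DecidableEq V] [DecidableEq β]
  [DecidableEq γ]

theorem prod_univ_eq_prod_coe_mul_prod_not_mem {M : Type} [CommMonoid M] (S : Finset V)
    (F : V → M) : ∏ v, F v = (∏ v : S, F v) * ∏ v : {v // v ∉ S}, F v := by
  rw [← prod_mul_prod_compl S F, prod_coe_sort S,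
    prod_subtype Sᶜ (fun _ => mem_compl) F]

theorem biUnion_range_sdiff_eq_compl {O : ℕ → Finset V} {L : ℕ}
    (hcover : ∀ v, ∃ l < L, v ∈ O (l + 1)) (S : Finset V) :
    (range L).biUnion (fun l => O (l + 1) \ S) = Sᶜ := by
  ext v
  simp only [mem_biUnion, mem_range, mem_sdiff, mem_compl]
  refine ⟨fun ⟨_, _, _, hv⟩ => hv, fun hv => ?_⟩
  obtain ⟨l, hlL, hvl⟩ := hcover v
  exact ⟨l, hlL, hvl, hv⟩

set_option synthInstance.maxSize 256 in
theorem indepLaw_block (X : V → Ω → β) (Yh : V → Ω → γ) (K : V → (V → β) → γ → ℝ)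
    (hlaw : ∀ x yh, prOf p (fun ω => ((fun v => X v ω), fun v => Yh v ω)) (x, yh) =
      (∏ v, prOf p (X v) (x v)) * ∏ v, K v x (yh v))
    (S T : Finset V)
    (hin : ∀ v ∈ T, ∀ x x' : V → β, (∀ u ∈ S, x u = x' u) → K v x = K v x')
    (hout : ∀ v ∉ T, ∀ x x' : V → β, (∀ u ∉ S, x u = x' u) → K v x = K v x') :
    IndepLaw p (fun ω => (joint X S ω, joint Yh T ω))
      (fun ω => ((fun v : {v // v ∉ S} => X v ω), fun v : {v // v ∉ T} => Yh v ω)) := by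
  rcases isEmpty_or_nonempty Ω with hΩ | hΩ
  · exact ⟨0, 0, fun _ _ => by simp [prOf]⟩
  obtain ⟨ω₀⟩ := hΩ
  let eS := Equiv.piEquivPiSubtypeProd (· ∈ S) fun _ : V => β
  let eT := Equiv.piEquivPiSubtypeProd (· ∈ T) fun _ : V => γ
  -- `x₀` only fills coordinates that the factors do not read, by `hin` and `hout`.
  let x₀ : V → β := fun v => X v ω₀
  refine ⟨fun b => (∏ v : S, prOf p (X v) (b.1 v)) *
      ∏ v : T, K v (eS.symm (b.1, fun v => x₀ v)) (b.2 v),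
    fun r => (∏ v : {v // v ∉ S}, prOf p (X v) (r.1 v)) *
      ∏ v : {v // v ∉ T}, K v (eS.symm (fun v => x₀ v, r.1)) (r.2 v), ?_⟩
  let E : (V → β) × (V → γ) ≃
      ((S → β) × (T → γ)) × (({v // v ∉ S} → β) × ({v // v ∉ T} → γ)) :=
    (eS.prodCongr eT).trans (Equiv.prodProdProdComm _ _ _ _)
  rintro ⟨xb, yb⟩ ⟨xr, yr⟩
  have hE : E.symm ((xb, yb), (xr, yr)) = (eS.symm (xb, xr), eT.symm (yb, yr)) := rfl
  refine (prOf_comp_equiv p (fun ω => ((fun v => X v ω), fun v => Yh v ω)) E _).trans ?_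
  have hKin : ∀ v : T, K v (eS.symm (xb, xr)) = K v (eS.symm (xb, fun v => x₀ v)) :=
    fun v => hin v v.2 _ _ fun u hu => by simp [eS, hu]
  have hKout : ∀ v : {v // v ∉ T}, K v (eS.symm (xb, xr)) = K v (eS.symm (fun v => x₀ v, xr)) :=
    fun v => hout v v.2 _ _ fun u hu => by simp [eS, hu]
  rw [hE, hlaw, prod_univ_eq_prod_coe_mul_prod_not_mem S, prod_univ_eq_prod_coe_mul_prod_not_mem T]
  have hxS : ∀ v : S, eS.symm (xb, xr) v = xb v := fun v => by simp [eS, v.2]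
  have hxSc : ∀ v : {v // v ∉ S}, eS.symm (xb, xr) v = xr v := fun v => by simp [eS, v.2]
  have hyT : ∀ v : T, eT.symm (yb, yr) v = yb v := fun v => by simp [eT, v.2]
  have hyTc : ∀ v : {v // v ∉ T}, eT.symm (yb, yr) v = yr v := fun v => by simp [eT, v.2]
  simp only [hKin, hKout, hxS, hxSc, hyT, hyTc]
  ring

variable [Fintype β] [Fintype γ]

theorem prOf_inputs_outputs_eq (X : V → Ω → β) (Y Yh : V → Ω → γ)
    (chan : V → (V → β) → γ → ℝ) (quant : V → γ → γ → ℝ)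
    (hfact : ∀ (x : V → β) (y yh : V → γ),
      prOf p (fun ω => ((fun v => X v ω), (fun v => Y v ω), fun v => Yh v ω)) (x, y, yh) =
        (∏ v, prOf p (X v) (x v)) * (∏ v, chan v x (y v)) * ∏ v, quant v (y v) (yh v))
    (x : V → β) (yh : V → γ) :
    prOf p (fun ω => ((fun v => X v ω), fun v => Yh v ω)) (x, yh) =
      (∏ v, prOf p (X v) (x v)) * ∏ v, ∑ c, chan v x c * quant v c (yh v) := by
  refine (prOf_comp p (fun ω => ((fun v => X v ω), (fun v => Y v ω), fun v => Yh v ω))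
    (fun s => (s.1, s.2.2)) (x, yh)).trans ?_
  simp [Fintype.sum_prod_type, hfact, ite_and, Fintype.prod_sum, prod_mul_distrib, mul_sum,
    mul_assoc]

theorem indepLaw_layer (O : ℕ → Finset V) (hdisj : ∀ i j, i ≠ j → Disjoint (O i) (O j))
    (hcover : ∀ v : V, ∃ l, v ∈ O (l + 1))
    (X : V → Ω → β) (Y Yh : V → Ω → γ)
    (chan : V → (V → β) → γ → ℝ) (quant : V → γ → γ → ℝ)
    (hdep : ∀ v : V, ∀ l, v ∈ O (l + 1) →
      ∀ x x' : V → β, (∀ u ∈ O l, x u = x' u) → chan v x = chan v x')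
    (hfact : ∀ (x : V → β) (y yh : V → γ),
      prOf p (fun ω => ((fun v => X v ω), (fun v => Y v ω), fun v => Yh v ω)) (x, y, yh) =
        (∏ v, prOf p (X v) (x v)) * (∏ v, chan v x (y v)) * ∏ v, quant v (y v) (yh v))
    (m : ℕ) :
    IndepLaw p (fun ω => (joint X (O m) ω, joint Yh (O (m + 1)) ω))
      (fun ω => ((fun v : {v // v ∉ O m} => X v ω), fun v : {v // v ∉ O (m + 1)} => Yh v ω)) := by
  refine indepLaw_block p X Yh (fun v x c => ∑ y, chan v x y * quant v y c)
    (prOf_inputs_outputs_eq p X Y Yh chan quant hfact) _ _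
    (fun v hv x x' h => by simp only [hdep v m hv x x' h]) fun v hv x x' h => ?_
  obtain ⟨l, hvl⟩ := hcover v
  have hlm : l ≠ m := by
    rintro rfl
    exact hv hvl
  simp only [hdep v l hvl x x' fun u hu => h u (disjoint_left.1 (hdisj l m hlm) hu)]

theorem condEnt_outputs_eq_of_indepLaw (hp : ∀ ω, 0 ≤ p ω) (X : V → Ω → β) (Yh : V → Ω → γ)
    {S T : Finset V}
    (hind : IndepLaw p (fun ω => (joint X S ω, joint Yh T ω))
      (fun ω => ((fun v : {v // v ∉ S} => X v ω), fun v : {v // v ∉ T} => Yh v ω)))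
    {D U : Finset V} (hD : D ⊆ T) (hU : Disjoint U T) (C : Finset V) :
    condEnt p (joint Yh D) (fun ω => (joint Yh U ω, joint X C ω)) =
      condEnt p (joint Yh D) (joint X (S ∩ C)) := by
  have hci : condMI p (fun ω => (joint X (C \ S) ω, joint Yh U ω)) (joint Yh D)
      (joint X (S ∩ C)) = 0 :=
    hind.condMI_comp_eq_zero p hp
      (fun r => (fun v : ↥(C \ S) => r.1 ⟨v, (mem_sdiff.1 v.2).2⟩,
        fun v : U => r.2 ⟨v, disjoint_left.1 hU v.2⟩))
      (fun b => restrict₂ (π := fun _ => γ) hD b.2)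
      (fun b => restrict₂ (π := fun _ => β) inter_subset_left b.1)
  have hsplit : condEnt p (joint Yh D)
        (fun ω => ((joint X (C \ S) ω, joint Yh U ω), joint X (S ∩ C) ω)) =
      condEnt p (joint Yh D) (fun ω => (joint Yh U ω, joint X C ω)) :=
    condEnt_comp_right_of_injective p _ (fun ω => (joint Yh U ω, joint X C ω))
      (g := fun q => ((restrict₂ (π := fun _ => β) sdiff_subset q.2, q.1),
        restrict₂ (π := fun _ => β) inter_subset_right q.2)) fun q q' h => by
      simp only [Prod.mk.injEq] at h
      refine Prod.ext h.1.2 (restrict₂_pair_injective sdiff_subset inter_subset_right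
        ?_ (Prod.ext h.1.1 h.2))
      rw [inter_comm, sdiff_union_inter]
  rw [condMI_eq_condEnt_sub, hsplit] at hci
  linarith

theorem condEnt_joint_biUnion_eq_sum (hp : ∀ ω, 0 ≤ p ω) (X : V → Ω → β) (Yh : V → Ω → γ)
    (O : ℕ → Finset V) (hdisj : ∀ i j, i ≠ j → Disjoint (O i) (O j))
    (hind : ∀ m, IndepLaw p (fun ω => (joint X (O m) ω, joint Yh (O (m + 1)) ω))
      (fun ω => ((fun v : {v // v ∉ O m} => X v ω), fun v : {v // v ∉ O (m + 1)} => Yh v ω)))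
    (D : ℕ → Finset V) (hD : ∀ l, D l ⊆ O (l + 1)) (C : Finset V) (m : ℕ) :
    condEnt p (joint Yh ((range m).biUnion D)) (joint X C) =
      ∑ l ∈ range m, condEnt p (joint Yh (D l)) (joint X (O l ∩ C)) := by
  induction m with
  | zero =>
    rw [range_zero, biUnion_empty, sum_empty]
    exact condEnt_eq_zero_of_subsingleton p _ _
  | succ m ih =>
    have hU : Disjoint ((range m).biUnion D) (O (m + 1)) := by
      refine (disjoint_biUnion_left _ _ _).2 fun l hl => disjoint_of_subset_left (hD l) ?_
      exact hdisj _ _ (by simp at hl; omega)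
    rw [range_add_one, biUnion_insert, sum_insert notMem_range_self,
      union_comm, ← condEnt_joint_union_left, condEnt_pair_eq_add, ih,
      condEnt_outputs_eq_of_indepLaw p hp X Yh (hind m) (hD m) hU, add_comm]

end Layers

theorem stmt16_general {Ω V β γ : Type} [Fintype Ω] [Fintype V] [DecidableEq V]
    [Fintype β] [DecidableEq β] [Fintype γ] [DecidableEq γ]
    (p : Ω → ℝ) (hp : ∀ ω, 0 ≤ p ω)
    (L : ℕ) (O : ℕ → Finset V)
    (hdisj : ∀ i j, i ≠ j → Disjoint (O i) (O j))
    (hcover : ∀ v : V, ∃ l, 1 ≤ l ∧ l ≤ L ∧ v ∈ O l)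
    (X : V → Ω → β) (Y Yh : V → Ω → γ)
    (chan : V → (V → β) → γ → ℝ) (quant : V → γ → γ → ℝ)
    (hdep : ∀ v : V, ∀ l, v ∈ O (l + 1) →
      ∀ x x' : V → β, (∀ u ∈ O l, x u = x' u) → chan v x = chan v x')
    (hfact : ∀ (x : V → β) (y yh : V → γ),
      prOf p (fun ω => ((fun v => X v ω), (fun v => Y v ω), fun v => Yh v ω)) (x, y, yh) =
        (∏ v, prOf p (X v) (x v)) * (∏ v, chan v x (y v)) * ∏ v, quant v (y v) (yh v))
    (Ωs : Finset V) :
    ∑ l ∈ Finset.Ico 1 L,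
        condMI p (joint X (Ωs ∩ O l)) (joint Yh (O (l + 1) \ Ωs)) (joint X (O l \ Ωs)) =
      condMI p (joint Yh Ωsᶜ) (joint X Ωs) (joint X Ωsᶜ) := by
  have hcover' : ∀ v, ∃ l < L, v ∈ O (l + 1) := fun v => by
    obtain ⟨l, hl, hlL, hvl⟩ := hcover v
    exact ⟨l - 1, by omega, by rwa [Nat.sub_add_cancel hl]⟩
  have hO₀ : O 0 = ∅ := eq_empty_of_forall_notMem fun v hv => by
    obtain ⟨l, -, hvl⟩ := hcover' v
    exact disjoint_left.1 (hdisj 0 (l + 1) (by omega)) hv hvl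
  have hind := indepLaw_layer p O hdisj (fun v => (hcover' v).imp fun _ h => h.2)
    X Y Yh chan quant hdep hfact
  have hchain : ∀ C, condEnt p (joint Yh Ωsᶜ) (joint X C) = ∑ l ∈ range L,
      condEnt p (joint Yh (O (l + 1) \ Ωs)) (joint X (O l ∩ C)) := fun C => by
    rw [← biUnion_range_sdiff_eq_compl hcover' Ωs]
    exact condEnt_joint_biUnion_eq_sum p hp X Yh O hdisj hind _ (fun _ => sdiff_subset) C L
  rw [condMI_comm, condMI_joint_eq, union_compl, hchain, hchain, ← sum_sub_distrib,
    ← sum_subset (s₁ := Ico 1 L) (s₂ := range L) fun l hl => by simp at hl ⊢; omega]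
  · refine sum_congr rfl fun l _ => ?_
    rw [condMI_joint_inter_sdiff, inter_univ, ← sdiff_eq_inter_compl]
  · intro l hl hl'
    obtain rfl : l = 0 := by simp at hl hl'; omega
    rw [hO₀, empty_inter, empty_inter, sub_self]

/-- For the layered product-form distribution, the cut value built from the
mutual-information capacities collapses:
`Σ_l I(X_{Ω∩O_l}; Ŷ_{O_{l+1}\Ω} | X_{O_l\Ω}) = I(Ŷ_{Ωᶜ}; X_Ω | X_{Ωᶜ})`. -/
theorem stmt16 {Ω V β γ : Type} [Fintype Ω] [Fintype V] [DecidableEq V]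
    [Fintype β] [DecidableEq β] [Fintype γ] [DecidableEq γ]
    (p : Ω → ℝ) (hp : ∀ ω, 0 ≤ p ω) (hp1 : ∑ ω, p ω = 1)
    (L : ℕ) (hL : 2 ≤ L) (O : ℕ → Finset V)
    (hdisj : ∀ i j, i ≠ j → Disjoint (O i) (O j))
    (hcover : ∀ v : V, ∃ l, 1 ≤ l ∧ l ≤ L ∧ v ∈ O l)
    (X : V → Ω → β) (Y Yh : V → Ω → γ)
    (chan : V → (V → β) → γ → ℝ) (quant : V → γ → γ → ℝ)
    (hdep : ∀ v : V, ∀ l, v ∈ O (l + 1) →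
      ∀ x x' : V → β, (∀ u ∈ O l, x u = x' u) → chan v x = chan v x')
    (hfact : ∀ (x : V → β) (y yh : V → γ),
      prOf p (fun ω => ((fun v => X v ω), (fun v => Y v ω), fun v => Yh v ω)) (x, y, yh) =
        (∏ v, prOf p (X v) (x v)) * (∏ v, chan v x (y v)) * ∏ v, quant v (y v) (yh v))
    (Ωs : Finset V) :
    ∑ l ∈ Finset.Ico 1 L,
        condMI p (joint X (Ωs ∩ O l)) (joint Yh (O (l + 1) \ Ωs)) (joint X (O l \ Ωs)) =
      condMI p (joint Yh Ωsᶜ) (joint X Ωs) (joint X Ωsᶜ) :=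
  stmt16_general p hp L O hdisj hcover X Y Yh chan quant hdep hfact Ωs

end
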